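/- arXiv:0902.0868 — 8 statements merged into one kernel-verified Lean document; each statement's English description precedes it below -/
import Mathlib

section
/- If a non-Kähler almost complex manifold with Norden metric (M,J,g) admits a natural connection ∇' (∇'J = ∇'g = 0) with totally skew-symmetric torsion tensor, then (M,J,g) is quasi-Kählerian, i.e., the cyclic sum over x,y,z of F(x,y,z) vanishes, where F(x,y,z) = g((∇_x J)y,z). -/
/-!
Skew-symmetry of the torsion `T(x,y,z) = Q(x,y,z) - Q(y,x,z)` in its last two arguments, together
with the skew-symmetry of `Q` in its last two arguments coming from `∇'g = 0`, makes `Q` totally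
skew-symmetric, hence invariant under cyclic permutations. Writing `F` through `Q`, the six terms
of the cyclic sum of `F` then cancel in pairs.
-/

section

variable {V A : Type*} [AddCommGroup A] {Q : V → V → V → A}

theorem eq_neg_swap_outer_of_skew_torsion (hQ : ∀ x y z, Q x y z = -Q x z y)
    {T : V → V → V → A} (hT : ∀ x y z, T x y z = Q x y z - Q y x z)
    (hTskew : ∀ x y z, T x y z = -T x z y) (x y z : V) :
    Q x y z = -Q z y x := by
  have h := hTskew y x z
  rw [hT, hT, hQ y x z] at h
  grind

theorem eq_cyclic_of_totally_skew (h₂₃ : ∀ x y z, Q x y z = -Q x z y)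
    (h₁₃ : ∀ x y z, Q x y z = -Q z y x) (x y z : V) : Q x y z = Q z x y := by
  rw [h₁₃, h₂₃, neg_neg]

theorem cyclic_sum_sub_comp_eq_zero (J : V → V) (hcyc : ∀ x y z, Q x y z = Q z x y)
    (x y z : V) :
    (Q x y (J z) - Q x (J y) z) + (Q y z (J x) - Q y (J z) x) + (Q z x (J y) - Q z (J x) y)
      = 0 := by
  rw [hcyc x (J y) z, hcyc y (J z) x, hcyc z (J x) y]
  abel

end

theorem natural_skew_torsion_implies_quasi_Kaehler_general
    {V : Type*} [AddCommGroup V] [Module ℝ V]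
    (J : V →ₗ[ℝ] V)
    (F Q T : V →ₗ[ℝ] V →ₗ[ℝ] V →ₗ[ℝ] ℝ)
    -- naturality of ∇' (∇'J = ∇'g = 0), in its equivalent tensor form:
    (hnat1 : ∀ x y z, F x y z = Q x y (J z) - Q x (J y) z)
    (hnat2 : ∀ x y z, Q x y z = - Q x z y)
    -- the torsion and its total skew-symmetry:
    (hT : ∀ x y z, T x y z = Q x y z - Q y x z)
    (hTskew : ∀ x y z, T x y z = - T x z y) :
    ∀ x y z, F x y z + F y z x + F z x y = 0 := by
  have hcyc : ∀ x y z, Q x y z = Q z x y :=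
    eq_cyclic_of_totally_skew hnat2 (eq_neg_swap_outer_of_skew_torsion hnat2 hT hTskew)
  intro x y z
  rw [hnat1, hnat1, hnat1]
  exact cyclic_sum_sub_comp_eq_zero J hcyc x y z

/-- If a non-Kähler almost complex manifold with Norden metric admits a natural
connection `∇'` (characterized by `F(x,y,z) = Q(x,y,Jz) - Q(x,Jy,z)` and
`Q(x,y,z) = -Q(x,z,y)`) with totally skew-symmetric torsion tensor `T`, then
the manifold is quasi-Kählerian: the cyclic sum of `F(x,y,z)=g((∇ₓJ)y,z)`
over `x,y,z` vanishes. -/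
theorem natural_skew_torsion_implies_quasi_Kaehler
    {V : Type*} [AddCommGroup V] [Module ℝ V]
    (g : V →ₗ[ℝ] V →ₗ[ℝ] ℝ) (hsymm : ∀ x y, g x y = g y x)
    (J : V →ₗ[ℝ] V) (hJ : ∀ x, J (J x) = -x)
    (hNorden : ∀ x y, g (J x) (J y) = - g x y)
    (nabla nabla' : V → V → V)
    (F Q T : V →ₗ[ℝ] V →ₗ[ℝ] V →ₗ[ℝ] ℝ)
    (hF : ∀ x y z, F x y z = g (nabla x (J y) - J (nabla x y)) z)
    (hQ : ∀ x y z, Q x y z = g (nabla' x y - nabla x y) z)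
    -- naturality of ∇' (∇'J = ∇'g = 0), in its equivalent tensor form:
    (hnat1 : ∀ x y z, F x y z = Q x y (J z) - Q x (J y) z)
    (hnat2 : ∀ x y z, Q x y z = - Q x z y)
    -- the torsion and its total skew-symmetry:
    (hT : ∀ x y z, T x y z = Q x y z - Q y x z)
    (hTskew : ∀ x y z, T x y z = - T x z y)
    -- the manifold is non-Kähler:
    (hnonK : ∃ x y z, F x y z ≠ 0) :
    ∀ x y z, F x y z + F y z x + F z x y = 0 :=
  natural_skew_torsion_implies_quasi_Kaehler_general J F Q T hnat1 hnat2 hT hTskew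
end

section
/- Suppose T is a totally skew-symmetric (0,3)-tensor on an almost complex vector space satisfying 3T(x,y,z) + T(Jx,Jy,z) + T(Jx,y,Jz) + T(x,Jy,Jz) = 0 for all x,y,z. Then T(x,y,Jz) = T(x,Jy,z) for all x,y,z. -/
theorem skew_T_J_identity_general
    {V : Type*} [AddCommGroup V] [Module ℝ V]
    (J : V →ₗ[ℝ] V) (hJ : ∀ x, J (J x) = -x)
    (T : V →ₗ[ℝ] V →ₗ[ℝ] V →ₗ[ℝ] ℝ)
    (h : ∀ x y z, 3 * T x y z + T (J x) (J y) z + T (J x) y (J z) +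
        T x (J y) (J z) = 0) :
    ∀ x y z, T x y (J z) = T x (J y) z := by
  intro x y z
  -- With `J² = -1`, the difference of the identities at `(x, y, Jz)` and `(x, Jy, z)`
  -- is `4 T(x, y, Jz) - 4 T(x, Jy, z) = 0`.
  have at_Jz := h x y (J z)
  have at_Jy := h x (J y) z
  simp only [hJ, map_neg, LinearMap.neg_apply] at at_Jz at_Jy
  linarith

/-- If `T` is a totally skew-symmetric trilinear (0,3)-tensor on an almost
complex vector space satisfying
`3T(x,y,z) + T(Jx,Jy,z) + T(Jx,y,Jz) + T(x,Jy,Jz) = 0`, then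
`T(x,y,Jz) = T(x,Jy,z)` for all `x,y,z`. -/
theorem skew_T_J_identity
    {V : Type*} [AddCommGroup V] [Module ℝ V]
    (J : V →ₗ[ℝ] V) (hJ : ∀ x, J (J x) = -x)
    (T : V →ₗ[ℝ] V →ₗ[ℝ] V →ₗ[ℝ] ℝ)
    (hT12 : ∀ x y z, T x y z = - T y x z)
    (hT23 : ∀ x y z, T x y z = - T x z y)
    (h : ∀ x y z, 3 * T x y z + T (J x) (J y) z + T (J x) y (J z) +
        T x (J y) (J z) = 0) :
    ∀ x y z, T x y (J z) = T x (J y) z :=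
  skew_T_J_identity_general J hJ T h
end

section
/- For the 4-dimensional Lie algebra with brackets [X₁,X₂]=λ₁X₁+λ₂X₂, [X₁,X₃]=λ₃X₂-λ₁X₄, [X₁,X₄]=-λ₃X₁-λ₂X₄, [X₂,X₃]=λ₄X₂+λ₁X₃, [X₂,X₄]=-λ₄X₁+λ₂X₃, [X₃,X₄]=λ₃X₃+λ₄X₄, with J defined by JX₁=X₃, JX₂=X₄, JX₃=-X₁, JX₄=-X₂ and g diagonal with g(X₁,X₁)=g(X₂,X₂)=1, g(X₃,X₃)=g(X₄,X₄)=-1, the bilinear form g̃(x,y)=g(x,Jy) is a Killing form for the bracket: g̃([x,y],z) + g̃(y,[x,z]) = 0 for all x,y,z. -/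
noncomputable section

/-- The basis vectors X₁, X₂, X₃, X₄ (0-indexed). -/
def X (i : Fin 4) : Fin 4 → ℝ := Pi.single i 1

/-- The almost complex structure: JX₁ = X₃, JX₂ = X₄, JX₃ = -X₁, JX₄ = -X₂. -/
def Jm (u : Fin 4 → ℝ) : Fin 4 → ℝ := ![-(u 2), -(u 3), u 0, u 1]

/-- The Norden metric: g(X₁,X₁)=g(X₂,X₂)=1, g(X₃,X₃)=g(X₄,X₄)=-1, off-diagonal 0. -/
def gm (u v : Fin 4 → ℝ) : ℝ := u 0 * v 0 + u 1 * v 1 - u 2 * v 2 - u 3 * v 3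

/-- The bilinear, antisymmetric bracket determined by
[X₁,X₂]=λ₁X₁+λ₂X₂, [X₁,X₃]=λ₃X₂-λ₁X₄, [X₁,X₄]=-λ₃X₁-λ₂X₄,
[X₂,X₃]=λ₄X₂+λ₁X₃, [X₂,X₄]=-λ₄X₁+λ₂X₃, [X₃,X₄]=λ₃X₃+λ₄X₄. -/
def br (l1 l2 l3 l4 : ℝ) (u v : Fin 4 → ℝ) : Fin 4 → ℝ :=
  ![ (u 0 * v 1 - u 1 * v 0) * l1 - (u 0 * v 3 - u 3 * v 0) * l3
       - (u 1 * v 3 - u 3 * v 1) * l4,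
     (u 0 * v 1 - u 1 * v 0) * l2 + (u 0 * v 2 - u 2 * v 0) * l3
       + (u 1 * v 2 - u 2 * v 1) * l4,
     (u 1 * v 2 - u 2 * v 1) * l1 + (u 1 * v 3 - u 3 * v 1) * l2
       + (u 2 * v 3 - u 3 * v 2) * l3,
     -(u 0 * v 2 - u 2 * v 0) * l1 - (u 0 * v 3 - u 3 * v 0) * l2
       + (u 2 * v 3 - u 3 * v 2) * l4 ]

/-- The associated metric g̃(x,y) = g(x,Jy). -/
def gt (u v : Fin 4 → ℝ) : ℝ := gm u (Jm v)

/-- The associated metric g̃ is a Killing form for the bracket: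
g̃([x,y],z) + g̃(y,[x,z]) = 0. -/
theorem associated_metric_killing (l1 l2 l3 l4 : ℝ) :
    ∀ x y z : Fin 4 → ℝ,
      gt (br l1 l2 l3 l4 x y) z + gt y (br l1 l2 l3 l4 x z) = 0 := by
  intro x y z
  simp only [gt, gm, Jm, br, Matrix.cons_val_zero, Matrix.cons_val_one, Matrix.cons_val_two,
    Matrix.cons_val_three, Matrix.head_cons, Matrix.tail_cons]
  ring
end
end

section
/- For the Lie group manifold (G,J,g) determined by the 4-parametric Lie algebra above, with left-invariant metric g and Levi-Civita connection ∇ computed via the Koszul formula 2g(∇_{X_i}X_j, X_k) = g([X_i,X_j],X_k) + g([X_k,X_i],X_j) + g([X_k,X_j],X_i), the tensor F(x,y,z) = g((∇_xJ)y,z) satisfies the cyclic identity F(x,y,z)+F(y,z,x)+F(z,x,y) = 0 on basis vectors, i.e., (G,J,g) is quasi-Kählerian. -/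
noncomputable section

/-- The diagonal entries g(Xₖ,Xₖ) of the metric. -/
def eps : Fin 4 → ℝ := ![1, 1, -1, -1]

/-- The Levi-Civita connection on basis vectors, via the Koszul formula
2g(∇_{Xᵢ}Xⱼ, Xₖ) = g([Xᵢ,Xⱼ],Xₖ) + g([Xₖ,Xᵢ],Xⱼ) + g([Xₖ,Xⱼ],Xᵢ). -/
def nbB (l1 l2 l3 l4 : ℝ) (i j : Fin 4) : Fin 4 → ℝ := fun k =>
  (eps k)⁻¹ * (1/2) *
    (gm (br l1 l2 l3 l4 (X i) (X j)) (X k) +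
     gm (br l1 l2 l3 l4 (X k) (X i)) (X j) +
     gm (br l1 l2 l3 l4 (X k) (X j)) (X i))

/-- The Levi-Civita connection, extended bilinearly to arbitrary vectors. -/
def nb (l1 l2 l3 l4 : ℝ) (u v : Fin 4 → ℝ) : Fin 4 → ℝ :=
  ∑ i : Fin 4, ∑ j : Fin 4, (u i * v j) • nbB l1 l2 l3 l4 i j

/-- The covariant derivative (∇ₓJ)y = ∇ₓ(Jy) - J(∇ₓy). -/
def DJ (l1 l2 l3 l4 : ℝ) (u v : Fin 4 → ℝ) : Fin 4 → ℝ :=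
  nb l1 l2 l3 l4 u (Jm v) - Jm (nb l1 l2 l3 l4 u v)

/-- The tensor F(x,y,z) = g((∇ₓJ)y, z). -/
def Fm (l1 l2 l3 l4 : ℝ) (x y z : Fin 4 → ℝ) : ℝ :=
  gm (DJ l1 l2 l3 l4 x y) z


/-!
Since `g(Ja, b) = g(a, Jb)`, the Koszul formula gives
`2F(x, y, z) = K(x, Jy, z) - K(x, y, Jz)` with `K(x, y, z) = g([x,y],z) + g([z,x],y) + g([z,y],x)`.
In the cyclic sum, after using antisymmetry of the bracket, the terms pair up and leave
`𝔖 g([x, Jy] - [Jx, y], z)`, a trilinear form that vanishes identically for this Lie algebra.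
So `F` is cyclic on all vectors, not only on the basis.
-/
section

variable (l1 l2 l3 l4 : ℝ)

theorem gm_sub_left (u v w : Fin 4 → ℝ) : gm (u - v) w = gm u w - gm v w := by
  simp only [gm, Pi.sub_apply]
  ring

theorem gm_Jm_left (u v : Fin 4 → ℝ) : gm (Jm u) v = gm u (Jm v) := by
  simp only [gm, Jm, Matrix.cons_val]
  ring

theorem gm_br_swap (u v w : Fin 4 → ℝ) :
    gm (br l1 l2 l3 l4 v u) w = -gm (br l1 l2 l3 l4 u v) w := by
  simp only [gm, br, Matrix.cons_val]
  ring

theorem two_mul_gm_nb (u v w : Fin 4 → ℝ) :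
    2 * gm (nb l1 l2 l3 l4 u v) w =
      gm (br l1 l2 l3 l4 u v) w + gm (br l1 l2 l3 l4 w u) v + gm (br l1 l2 l3 l4 w v) u := by
  simp only [gm, nb, nbB, br, eps, X, Fin.sum_univ_four, Finset.sum_apply, Pi.add_apply, Pi.smul_apply,
    smul_eq_mul, Pi.single_apply, Matrix.cons_val, Fin.reduceEq, ↓reduceIte]
  ring

theorem two_mul_Fm (x y z : Fin 4 → ℝ) :
    2 * Fm l1 l2 l3 l4 x y z =
      gm (br l1 l2 l3 l4 x (Jm y)) z + gm (br l1 l2 l3 l4 z x) (Jm y)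
        + gm (br l1 l2 l3 l4 z (Jm y)) x - gm (br l1 l2 l3 l4 x y) (Jm z)
        - gm (br l1 l2 l3 l4 (Jm z) x) y - gm (br l1 l2 l3 l4 (Jm z) y) x := by
  rw [Fm, DJ, gm_sub_left, gm_Jm_left, mul_sub, two_mul_gm_nb, two_mul_gm_nb]
  ring

theorem Fm_cyclic_sum (x y z : Fin 4 → ℝ) :
    Fm l1 l2 l3 l4 x y z + Fm l1 l2 l3 l4 y z x + Fm l1 l2 l3 l4 z x y =
      gm (br l1 l2 l3 l4 x (Jm y)) z - gm (br l1 l2 l3 l4 (Jm x) y) z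
        + (gm (br l1 l2 l3 l4 y (Jm z)) x - gm (br l1 l2 l3 l4 (Jm y) z) x)
        + (gm (br l1 l2 l3 l4 z (Jm x)) y - gm (br l1 l2 l3 l4 (Jm z) x) y) := by
  have hx := two_mul_Fm l1 l2 l3 l4 x y z
  have hy := two_mul_Fm l1 l2 l3 l4 y z x
  have hz := two_mul_Fm l1 l2 l3 l4 z x y
  rw [gm_br_swap l1 l2 l3 l4 (Jm y) z, gm_br_swap l1 l2 l3 l4 y (Jm z)] at hx
  rw [gm_br_swap l1 l2 l3 l4 (Jm z) x, gm_br_swap l1 l2 l3 l4 z (Jm x)] at hy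
  rw [gm_br_swap l1 l2 l3 l4 (Jm x) y, gm_br_swap l1 l2 l3 l4 x (Jm y)] at hz
  linear_combination (hx + hy + hz) / 2

theorem gm_br_Jm_cyclic_sum_eq_zero (x y z : Fin 4 → ℝ) :
      gm (br l1 l2 l3 l4 x (Jm y)) z - gm (br l1 l2 l3 l4 (Jm x) y) z
        + (gm (br l1 l2 l3 l4 y (Jm z)) x - gm (br l1 l2 l3 l4 (Jm y) z) x)
        + (gm (br l1 l2 l3 l4 z (Jm x)) y - gm (br l1 l2 l3 l4 (Jm z) x) y) = 0 := by
  simp only [gm, br, Jm, Matrix.cons_val]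
  ring

end

/-- (G,J,g) is quasi-Kählerian: the cyclic sum of F vanishes on basis vectors. -/
theorem quasi_Kaehler_cyclic_F (l1 l2 l3 l4 : ℝ) :
    ∀ i j k : Fin 4,
      Fm l1 l2 l3 l4 (X i) (X j) (X k) + Fm l1 l2 l3 l4 (X j) (X k) (X i) +
        Fm l1 l2 l3 l4 (X k) (X i) (X j) = 0 := fun i j k => by
  rw [Fm_cyclic_sum, gm_br_Jm_cyclic_sum_eq_zero]
end
end

section
/- For the 4-parametric family (G,J,g), the square norm ‖∇J‖² = g^{ij}g^{ks} g((∇_{e_i}J)e_k, (∇_{e_j}J)e_s) computed in the basis {X₁,X₂,X₃,X₄} equals -4(λ₁²+λ₂²-λ₃²-λ₄²). In particular, (G,J,g) is isotropic Kähler (‖∇J‖² = 0) iff λ₁²+λ₂²-λ₃²-λ₄² = 0. -/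
noncomputable section

/-- The square norm ‖∇J‖² = gⁱʲgᵏˢ g((∇_{eᵢ}J)eₖ, (∇_{eⱼ}J)eₛ) in the basis {Xᵢ}
(the inverse metric being diagonal with entries 1,1,-1,-1). -/
def sqnormDJ (l1 l2 l3 l4 : ℝ) : ℝ :=
  ∑ i : Fin 4, ∑ k : Fin 4,
    (eps i)⁻¹ * (eps k)⁻¹ *
      gm (DJ l1 l2 l3 l4 (X i) (X k)) (DJ l1 l2 l3 l4 (X i) (X k))

/-! The Koszul formula gives the Levi-Civita connection on the basis as an explicit table of
Christoffel symbols. Since `J Xₖ = εₖ Xₖ₊₂`, each `(∇_{Xᵢ}J)Xₖ = εₖ ∇_{Xᵢ}Xₖ₊₂ - J ∇_{Xᵢ}Xₖ` is read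
off from that table, and the contraction defining `‖∇J‖²` becomes a polynomial identity in the `λ`s. -/

lemma nb_X_X (l1 l2 l3 l4 : ℝ) (i j : Fin 4) :
    nb l1 l2 l3 l4 (X i) (X j) = nbB l1 l2 l3 l4 i j := by
  simp [nb, X, Pi.single_apply, ite_smul, Finset.sum_ite_eq']

lemma nb_smul_right (l1 l2 l3 l4 : ℝ) (u v : Fin 4 → ℝ) (c : ℝ) :
    nb l1 l2 l3 l4 u (c • v) = c • nb l1 l2 l3 l4 u v := by
  simp only [nb, Finset.smul_sum, smul_smul, Pi.smul_apply, smul_eq_mul]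
  congr! 3
  ring

lemma Jm_X (k : Fin 4) : Jm (X k) = eps k • X (k + 2) := by
  fin_cases k <;> funext m <;> fin_cases m <;> simp [Jm, X, eps]

lemma DJ_X_X (l1 l2 l3 l4 : ℝ) (i k : Fin 4) :
    DJ l1 l2 l3 l4 (X i) (X k) =
      eps k • nbB l1 l2 l3 l4 i (k + 2) - Jm (nbB l1 l2 l3 l4 i k) := by
  rw [DJ, Jm_X, nb_smul_right, nb_X_X, nb_X_X]

/-- `christoffel l1 l2 l3 l4 i j k` is the `Xₖ`-component of `∇_{Xᵢ}Xⱼ`. -/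
def christoffel (l1 l2 l3 l4 : ℝ) : Fin 4 → Fin 4 → Fin 4 → ℝ :=
  ![![![0, -l1, 0, -l3], ![l1, 0, l3/2, -l4/2], ![0, l3/2, 0, -l1/2], ![-l3, -l4/2, l1/2, 0]],
    ![![0, -l2, l3/2, -l4/2], ![l2, 0, l4, 0], ![l3/2, l4, 0, -l2/2], ![-l4/2, 0, l2/2, 0]],
    ![![0, -l3/2, 0, l1/2], ![l3/2, 0, -l1, -l2/2], ![0, -l1, 0, -l3], ![l1/2, -l2/2, l3, 0]],
    ![![0, -l4/2, l1/2, l2], ![l4/2, 0, -l2/2, 0], ![l1/2, -l2/2, 0, -l4], ![l2, 0, l4, 0]]]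

lemma nbB_eq_christoffel (l1 l2 l3 l4 : ℝ) (i j : Fin 4) :
    nbB l1 l2 l3 l4 i j = christoffel l1 l2 l3 l4 i j := by
  funext k
  fin_cases i <;> fin_cases j <;> fin_cases k <;>
    simp only [nbB, christoffel, gm, br, eps, X, Pi.single_apply, Matrix.cons_val,
      Fin.reduceFinMk, Fin.reduceEq, if_true, if_false] <;>
    ring

lemma sqnormDJ_eq (l1 l2 l3 l4 : ℝ) :
    sqnormDJ l1 l2 l3 l4 = -4 * (l1^2 + l2^2 - l3^2 - l4^2) := by
  simp only [sqnormDJ, DJ_X_X, nbB_eq_christoffel, Fin.sum_univ_four]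
  simp only [christoffel, Jm, gm, eps, Fin.reduceAdd, Matrix.cons_val, Pi.sub_apply,
    Pi.smul_apply, smul_eq_mul]
  ring

/-- ‖∇J‖² = -4(λ₁²+λ₂²-λ₃²-λ₄²); in particular (G,J,g) is isotropic Kähler
iff λ₁²+λ₂²-λ₃²-λ₄² = 0. -/
theorem sqnorm_DJ_eq (l1 l2 l3 l4 : ℝ) :
    sqnormDJ l1 l2 l3 l4 = -4 * (l1^2 + l2^2 - l3^2 - l4^2) ∧
    (sqnormDJ l1 l2 l3 l4 = 0 ↔ l1^2 + l2^2 - l3^2 - l4^2 = 0) := by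
  refine ⟨sqnormDJ_eq l1 l2 l3 l4, ?_⟩
  rw [sqnormDJ_eq, mul_eq_zero]
  norm_num
end
end

section
/- For the 4-parametric family (G,J,g), the torsion of the unique natural connection with totally skew-symmetric torsion satisfies T(X_i,X_j) = [JX_i,JX_j], and its nonzero (0,3)-components are T₁₃₄=λ₁, T₂₃₄=λ₂, T₁₂₃=-λ₃, T₁₂₄=-λ₄ (up to skew-symmetry). -/
noncomputable section

/-- The torsion of the unique natural connection with totally skew-symmetric
torsion: 4T(Xᵢ,Xⱼ) = 3[JXᵢ,JXⱼ] - J[Xᵢ,JXⱼ] - J[JXᵢ,Xⱼ] + [Xᵢ,Xⱼ]. -/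
def Tt (l1 l2 l3 l4 : ℝ) (i j : Fin 4) : Fin 4 → ℝ :=
  (4 : ℝ)⁻¹ • ((3 : ℝ) • br l1 l2 l3 l4 (Jm (X i)) (Jm (X j))
    - Jm (br l1 l2 l3 l4 (X i) (Jm (X j)))
    - Jm (br l1 l2 l3 l4 (Jm (X i)) (X j))
    + br l1 l2 l3 l4 (X i) (X j))

section

variable (l1 l2 l3 l4 : ℝ)

theorem br_swap (u v : Fin 4 → ℝ) : br l1 l2 l3 l4 v u = -br l1 l2 l3 l4 u v := by
  funext k; fin_cases k <;> simp [br] <;> ring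

theorem br_neg_right (u v : Fin 4 → ℝ) : br l1 l2 l3 l4 u (-v) = -br l1 l2 l3 l4 u v := by
  funext k; fin_cases k <;> simp [br] <;> ring

theorem br_Jm_Jm (u v : Fin 4 → ℝ) :
    br l1 l2 l3 l4 (Jm u) (Jm v) =
      br l1 l2 l3 l4 u v - Jm (br l1 l2 l3 l4 u (Jm v)) - Jm (br l1 l2 l3 l4 (Jm u) v) := by
  funext k; fin_cases k <;> simp [br, Jm] <;> ring

theorem Tt_eq_br_Jm_Jm (i j : Fin 4) :
    Tt l1 l2 l3 l4 i j = br l1 l2 l3 l4 (Jm (X i)) (Jm (X j)) := by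
  have h := br_Jm_Jm l1 l2 l3 l4 (X i) (X j)
  unfold Tt
  linear_combination (norm := module) (-(4 : ℝ)⁻¹) • h

theorem br_X_zero_X_two : br l1 l2 l3 l4 (X 0) (X 2) = l3 • X 1 - l1 • X 3 := by
  funext k; fin_cases k <;> simp [br, X]

theorem br_X_zero_X_three : br l1 l2 l3 l4 (X 0) (X 3) = -l3 • X 0 - l2 • X 3 := by
  funext k; fin_cases k <;> simp [br, X]

theorem br_X_two_X_three : br l1 l2 l3 l4 (X 2) (X 3) = l3 • X 2 + l4 • X 3 := by
  funext k; fin_cases k <;> simp [br, X]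

end

theorem Jm_X_zero : Jm (X 0) = X 2 := by
  funext k; fin_cases k <;> simp [Jm, X]

theorem Jm_X_one : Jm (X 1) = X 3 := by
  funext k; fin_cases k <;> simp [Jm, X]

theorem Jm_X_two : Jm (X 2) = -X 0 := by
  funext k; fin_cases k <;> simp [Jm, X]

theorem gm_X_two (u : Fin 4 → ℝ) : gm u (X 2) = -u 2 := by
  simp [gm, X]

theorem gm_X_three (u : Fin 4 → ℝ) : gm u (X 3) = -u 3 := by
  simp [gm, X]

/-- T(Xᵢ,Xⱼ) = [JXᵢ,JXⱼ], and the nonzero (0,3)-components are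
T₁₃₄ = λ₁, T₂₃₄ = λ₂, T₁₂₃ = -λ₃, T₁₂₄ = -λ₄ (up to skew-symmetry). -/
theorem torsion_components (l1 l2 l3 l4 : ℝ) :
    (∀ i j : Fin 4, Tt l1 l2 l3 l4 i j = br l1 l2 l3 l4 (Jm (X i)) (Jm (X j))) ∧
    gm (Tt l1 l2 l3 l4 0 2) (X 3) = l1 ∧
    gm (Tt l1 l2 l3 l4 1 2) (X 3) = l2 ∧
    gm (Tt l1 l2 l3 l4 0 1) (X 2) = -l3 ∧
    gm (Tt l1 l2 l3 l4 0 1) (X 3) = -l4 := by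
  refine ⟨Tt_eq_br_Jm_Jm l1 l2 l3 l4, ?_, ?_, ?_, ?_⟩ <;>
  · simp only [Tt_eq_br_Jm_Jm, Jm_X_zero, Jm_X_one, Jm_X_two, br_neg_right,
      br_swap l1 l2 l3 l4 (X 0), neg_neg, br_X_zero_X_two, br_X_zero_X_three, br_X_two_X_three,
      gm_X_two, gm_X_three]
    simp [X]
end
end

section
/- For the 4-parametric family (G,J,g), the identity [JX_i,JX_j] + J[JX_i,X_j] = [X_i,X_j] - J[X_i,JX_j] holds for all i,j. -/
noncomputable section

theorem br_Jm_Jm_add_Jm_br_Jm (l1 l2 l3 l4 : ℝ) (u v : Fin 4 → ℝ) :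
    br l1 l2 l3 l4 (Jm u) (Jm v) + Jm (br l1 l2 l3 l4 (Jm u) v) =
      br l1 l2 l3 l4 u v - Jm (br l1 l2 l3 l4 u (Jm v)) := by
  ext k
  fin_cases k <;>
    simp only [br, Jm, Pi.add_apply, Pi.sub_apply, Fin.isValue, Fin.zero_eta, Fin.mk_one,
      Fin.reduceFinMk, Matrix.cons_val_zero, Matrix.cons_val_one, Matrix.cons_val] <;>
    ring

/-- [JXᵢ,JXⱼ] + J[JXᵢ,Xⱼ] = [Xᵢ,Xⱼ] - J[Xᵢ,JXⱼ] for all i,j. -/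
theorem bracket_J_identity (l1 l2 l3 l4 : ℝ) :
    ∀ i j : Fin 4,
      br l1 l2 l3 l4 (Jm (X i)) (Jm (X j)) +
        Jm (br l1 l2 l3 l4 (Jm (X i)) (X j)) =
      br l1 l2 l3 l4 (X i) (X j) - Jm (br l1 l2 l3 l4 (X i) (Jm (X j))) := by
  exact fun i j => br_Jm_Jm_add_Jm_br_Jm l1 l2 l3 l4 (X i) (X j)
end
end

section
/- Let ∇' be a metric connection with parallel totally skew-symmetric torsion T on a pseudo-Riemannian manifold, Q = (1/2)T its transformation tensor. Then the curvature tensors satisfy R'(x,y,z,w) = R(x,y,z,w) + 2g(Q(x,y),Q(z,w)) - g(Q(x,z),Q(y,w)) + g(Q(y,z),Q(x,w)). Moreover, R' satisfies the first Bianchi identity (and hence is curvature-like together with R's symmetries) iff the cyclic sum over x,y,z of g(Q(x,y),Q(z,w)) vanishes. -/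
/-!
Since `∇'Q = 0`, the Levi-Civita derivative `(∇ₓQ)(y,z,w)` equals
`Q(Q(x,y),z,w) + Q(y,Q(x,z),w) + Q(y,z,Q(x,w))`, so every term of the general formula for `R'`
beyond `R` is quadratic in `Q`. Total skew-symmetry of `g(Q(·,·),·)` collapses these terms to
`2g(Q(x,y),Q(z,w)) - g(Q(x,z),Q(y,w)) + g(Q(y,z),Q(x,w))`, whose cyclic sum over `x,y,z` is four
times the cyclic sum of `g(Q(x,y),Q(z,w))`; as `R` satisfies the first Bianchi identity and `4` is
invertible, the criterion follows.
-/

section SkewTorsion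

variable {R V : Type*} [CommRing R] [AddCommGroup V] [Module R V]
  (g : V →ₗ[R] V →ₗ[R] R) (Q : V → V → V)

/-- `(∇ₓQ)(y,z,w)`, for `Q` viewed as the `(0,3)`-tensor `g (Q · ·) ·`. -/
def covDerivQ (nabla : V → V → V) (d : V → R → R) (x y z w : V) : R :=
  d x (g (Q y z) w) - g (Q (nabla x y) z) w - g (Q y (nabla x z)) w - g (Q y z) (nabla x w)

variable {g Q}

theorem skewForm_cyclic (hQ12 : ∀ x y z, g (Q x y) z = - g (Q y x) z)
    (hQ23 : ∀ x y z, g (Q x y) z = - g (Q x z) y) (x y z : V) :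
    g (Q x y) z = g (Q y z) x := by
  rw [hQ12 x y z, hQ23 y x z, neg_neg]

theorem skewForm_add_left (hQ12 : ∀ x y z, g (Q x y) z = - g (Q y x) z)
    (hQ23 : ∀ x y z, g (Q x y) z = - g (Q x z) y) (a b z w : V) :
    g (Q (a + b) z) w = g (Q a z) w + g (Q b z) w := by
  simp only [skewForm_cyclic hQ12 hQ23 _ z w, map_add]

theorem skewForm_add_right (hQ23 : ∀ x y z, g (Q x y) z = - g (Q x z) y) (y a b w : V) :
    g (Q y (a + b)) w = g (Q y a) w + g (Q y b) w := by
  rw [hQ23 y (a + b), hQ23 y a, hQ23 y b, map_add, neg_add]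

theorem covDerivQ_of_parallel {nabla : V → V → V} {d : V → R → R}
    (hQ12 : ∀ x y z, g (Q x y) z = - g (Q y x) z)
    (hQ23 : ∀ x y z, g (Q x y) z = - g (Q x z) y)
    (hpar : ∀ x y z w, d x (g (Q y z) w) =
        g (Q (nabla x y + Q x y) z) w + g (Q y (nabla x z + Q x z)) w +
          g (Q y z) (nabla x w + Q x w))
    (x y z w : V) :
    covDerivQ g Q nabla d x y z w =
      g (Q (Q x y) z) w + g (Q y (Q x z)) w + g (Q y z) (Q x w) := by
  rw [covDerivQ, hpar, skewForm_add_left hQ12 hQ23, skewForm_add_right hQ23, map_add]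
  ring

theorem curvature_eq_of_parallel_skew_torsion (hsymm : ∀ x y, g x y = g y x)
    {nabla : V → V → V} {d : V → R → R}
    (hQ12 : ∀ x y z, g (Q x y) z = - g (Q y x) z)
    (hQ23 : ∀ x y z, g (Q x y) z = - g (Q x z) y)
    (hpar : ∀ x y z w, d x (g (Q y z) w) =
        g (Q (nabla x y + Q x y) z) w + g (Q y (nabla x z + Q x z)) w +
          g (Q y z) (nabla x w + Q x w))
    {Rm R' : V → V → V → V → R}
    (hR' : ∀ x y z w, R' x y z w = Rm x y z w + covDerivQ g Q nabla d x y z w -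
        covDerivQ g Q nabla d y x z w + g (Q x (Q y z)) w - g (Q y (Q x z)) w)
    (x y z w : V) :
    R' x y z w = Rm x y z w + 2 * g (Q x y) (Q z w) -
      g (Q x z) (Q y w) + g (Q y z) (Q x w) := by
  have hxy : g (Q (Q x y) z) w = g (Q x y) (Q z w) := by
    rw [skewForm_cyclic hQ12 hQ23, hsymm]
  have hyx : g (Q (Q y x) z) w = - g (Q x y) (Q z w) := by
    rw [skewForm_cyclic hQ12 hQ23, hsymm, hQ12]
  rw [hR', covDerivQ_of_parallel hQ12 hQ23 hpar, covDerivQ_of_parallel hQ12 hQ23 hpar]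
  linear_combination hxy - hyx

theorem cyclicSum_curvature (hQ12 : ∀ x y z, g (Q x y) z = - g (Q y x) z)
    {Rm R' : V → V → V → V → R}
    (hBianchi : ∀ x y z w, Rm x y z w + Rm y z x w + Rm z x y w = 0)
    (hR' : ∀ x y z w, R' x y z w = Rm x y z w + 2 * g (Q x y) (Q z w) -
        g (Q x z) (Q y w) + g (Q y z) (Q x w))
    (x y z w : V) :
    R' x y z w + R' y z x w + R' z x y w =
      4 * (g (Q x y) (Q z w) + g (Q y z) (Q x w) + g (Q z x) (Q y w)) := by
  rw [hR', hR', hR']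
  linear_combination hBianchi x y z w - hQ12 x z (Q y w) - hQ12 y x (Q z w) - hQ12 z y (Q x w)

end SkewTorsion

theorem parallel_skew_torsion_curvature_general
    {R V : Type*} [CommRing R] [Algebra ℝ R] [AddCommGroup V] [Module R V]
    (g : V →ₗ[R] V →ₗ[R] R) (hsymm : ∀ x y, g x y = g y x)
    (nabla : V → V → V) (Q : V → V → V) (d : V → R → R)
    -- Q = (1/2)T is a 3-form:
    (hQ12 : ∀ x y z, g (Q x y) z = - g (Q y x) z)
    (hQ23 : ∀ x y z, g (Q x y) z = - g (Q x z) y)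
    -- the torsion is parallel: ∇'Q = 0 for ∇' = ∇ + Q:
    (hpar : ∀ x y z w, d x (g (Q y z) w) =
        g (Q (nabla x y + Q x y) z) w + g (Q y (nabla x z + Q x z)) w +
          g (Q y z) (nabla x w + Q x w))
    -- the (0,4)-curvature of the Levi-Civita connection and its first Bianchi identity:
    (Rm : V → V → V → V → R)
    (hBianchi : ∀ x y z w, Rm x y z w + Rm y z x w + Rm z x y w = 0)
    -- the (0,4)-curvature R' of ∇', via the general formula
    -- R' = R + (∇ₓQ)(y,z,w) - (∇_yQ)(x,z,w) + Q(x,Q(y,z),w) - Q(y,Q(x,z),w):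
    (R' : V → V → V → V → R)
    (hR' : ∀ x y z w, R' x y z w = Rm x y z w +
        (d x (g (Q y z) w) - g (Q (nabla x y) z) w - g (Q y (nabla x z)) w -
          g (Q y z) (nabla x w)) -
        (d y (g (Q x z) w) - g (Q (nabla y x) z) w - g (Q x (nabla y z)) w -
          g (Q x z) (nabla y w)) +
        g (Q x (Q y z)) w - g (Q y (Q x z)) w) :
    (∀ x y z w, R' x y z w = Rm x y z w + 2 * g (Q x y) (Q z w) -
        g (Q x z) (Q y w) + g (Q y z) (Q x w)) ∧
    ((∀ x y z w, R' x y z w + R' y z x w + R' z x y w = 0) ↔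
      (∀ x y z w, g (Q x y) (Q z w) + g (Q y z) (Q x w) +
        g (Q z x) (Q y w) = 0)) := by
  have hcurv := curvature_eq_of_parallel_skew_torsion hsymm hQ12 hQ23 hpar hR'
  have h4 : IsUnit (4 : R) := by
    rw [← map_ofNat (algebraMap ℝ R) 4]
    exact (isUnit_iff_ne_zero.mpr four_ne_zero).map _
  refine ⟨hcurv, ?_⟩
  simp only [cyclicSum_curvature hQ12 hBianchi hcurv, h4.mul_right_eq_zero]

/-- For a metric connection `∇' = ∇ + Q` with parallel totally skew-symmetric
torsion `T = 2Q` on a pseudo-Riemannian manifold (modelled algebraically, with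
function ring `R`, vector fields `V`, directional derivative `d`), the
curvature tensors satisfy
`R'(x,y,z,w) = R(x,y,z,w) + 2g(Q(x,y),Q(z,w)) - g(Q(x,z),Q(y,w)) + g(Q(y,z),Q(x,w))`,
and `R'` satisfies the first Bianchi identity iff the cyclic sum over `x,y,z`
of `g(Q(x,y),Q(z,w))` vanishes. -/
theorem parallel_skew_torsion_curvature
    {R V : Type*} [CommRing R] [Algebra ℝ R] [AddCommGroup V] [Module R V]
    (g : V →ₗ[R] V →ₗ[R] R) (hsymm : ∀ x y, g x y = g y x)
    (nabla : V → V → V) (Q : V → V → V) (d : V → R → R)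
    -- metric compatibility of the Levi-Civita connection:
    (hmetric : ∀ x y z, d x (g y z) = g (nabla x y) z + g y (nabla x z))
    -- Q = (1/2)T is a 3-form:
    (hQ12 : ∀ x y z, g (Q x y) z = - g (Q y x) z)
    (hQ23 : ∀ x y z, g (Q x y) z = - g (Q x z) y)
    -- the torsion is parallel: ∇'Q = 0 for ∇' = ∇ + Q:
    (hpar : ∀ x y z w, d x (g (Q y z) w) =
        g (Q (nabla x y + Q x y) z) w + g (Q y (nabla x z + Q x z)) w +
          g (Q y z) (nabla x w + Q x w))
    -- the (0,4)-curvature of the Levi-Civita connection and its first Bianchi identity: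
    (Rm : V → V → V → V → R)
    (hBianchi : ∀ x y z w, Rm x y z w + Rm y z x w + Rm z x y w = 0)
    -- the (0,4)-curvature R' of ∇', via the general formula
    -- R' = R + (∇ₓQ)(y,z,w) - (∇_yQ)(x,z,w) + Q(x,Q(y,z),w) - Q(y,Q(x,z),w):
    (R' : V → V → V → V → R)
    (hR' : ∀ x y z w, R' x y z w = Rm x y z w +
        (d x (g (Q y z) w) - g (Q (nabla x y) z) w - g (Q y (nabla x z)) w -
          g (Q y z) (nabla x w)) -
        (d y (g (Q x z) w) - g (Q (nabla y x) z) w - g (Q x (nabla y z)) w -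
          g (Q x z) (nabla y w)) +
        g (Q x (Q y z)) w - g (Q y (Q x z)) w) :
    (∀ x y z w, R' x y z w = Rm x y z w + 2 * g (Q x y) (Q z w) -
        g (Q x z) (Q y w) + g (Q y z) (Q x w)) ∧
    ((∀ x y z w, R' x y z w + R' y z x w + R' z x y w = 0) ↔
      (∀ x y z w, g (Q x y) (Q z w) + g (Q y z) (Q x w) +
        g (Q z x) (Q y w) = 0)) :=
  parallel_skew_torsion_curvature_general g hsymm nabla Q d hQ12 hQ23 hpar Rm hBianchi R' hR'
end
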